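/- arXiv:2001.09654 — 2 statements merged into one kernel-verified Lean document; each statement's English description precedes it below -/
import Mathlib

section
/- There exists a finite joint distribution of a class variable C and two features f, g such that H(C|f) < H(C|g) (Shannon prefers f) while H_∞(C|g) < H_∞(C|f) (min-entropy prefers g); hence the greedy feature selections based on Shannon entropy and on Rényi min-entropy can make different first choices. -/
/-- The witness joint distribution: 10 classes (uniform), feature `f` with 2
values (classes 0-3 ↦ 0, classes 4-9 ↦ 1), feature `g` with 3 values
(class 0 ↦ 0, class 1 ↦ 1, classes 2-9 ↦ 2). -/
noncomputable def Pjoint : Fin 10 → Fin 2 → Fin 3 → ℝ := fun c f g =>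
  if (f = if (c:ℕ) < 4 then 0 else 1) ∧
     (g = if (c:ℕ) = 0 then 0 else if (c:ℕ) = 1 then 1 else 2) then 1/10 else 0

/-- There is a finite joint distribution of a class `C` and features `f`, `g`
such that Shannon conditional entropy prefers `f` (`H(C|f) < H(C|g)`) while
Rényi min-entropy prefers `g` (`H_∞(C|g) < H_∞(C|f)`). -/
theorem exists_shannon_renyi_disagree :
    ∃ (n k l : ℕ) (p : Fin (n + 1) → Fin (k + 1) → Fin (l + 1) → ℝ),
      (∀ c f g, 0 ≤ p c f g) ∧ (∑ c, ∑ f, ∑ g, p c f g = 1) ∧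
      (-∑ c, ∑ f, (∑ g, p c f g) *
          Real.log ((∑ g, p c f g) / ∑ c', ∑ g, p c' f g) <
       -∑ c, ∑ g, (∑ f, p c f g) *
          Real.log ((∑ f, p c f g) / ∑ c', ∑ f, p c' f g)) ∧
      (-Real.log (∑ g, Finset.univ.sup' Finset.univ_nonempty
          (fun c => ∑ f, p c f g)) <
       -Real.log (∑ f, Finset.univ.sup' Finset.univ_nonempty
          (fun c => ∑ g, p c f g))) := by
  refine ⟨9, 1, 2, Pjoint, ?_, ?_, ?_, ?_⟩
  · intro c f g
    unfold Pjoint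
    split_ifs <;> norm_num
  · simp +decide [Pjoint, Fin.sum_univ_succ]
    norm_num
  · have h4 : Real.log 4 = 2 * Real.log 2 := by
      rw [show (4:ℝ) = 2^2 by norm_num, Real.log_pow]; norm_num
    have h8 : Real.log 8 = 3 * Real.log 2 := by
      rw [show (8:ℝ) = 2^3 by norm_num, Real.log_pow]; norm_num
    have h6 : Real.log 6 = Real.log 2 + Real.log 3 := by
      rw [show (6:ℝ) = 2*3 by norm_num, Real.log_mul (by norm_num) (by norm_num)]
    have hkey : Real.log 27 < Real.log 32 :=
      Real.log_lt_log (by norm_num) (by norm_num)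
    have h27 : Real.log 27 = 3 * Real.log 3 := by
      rw [show (27:ℝ) = 3^3 by norm_num, Real.log_pow]; norm_num
    have h32 : Real.log 32 = 5 * Real.log 2 := by
      rw [show (32:ℝ) = 2^5 by norm_num, Real.log_pow]; norm_num
    have i6 : Real.log (1/6) = -Real.log 6 := by rw [one_div, Real.log_inv]
    have i4 : Real.log (1/4) = -Real.log 4 := by rw [one_div, Real.log_inv]
    have i8 : Real.log (1/8) = -Real.log 8 := by rw [one_div, Real.log_inv]
    simp +decide [Pjoint, Fin.sum_univ_succ]
    linarith
  · have sup_le_g : ∀ gv : Fin 3,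
        Finset.univ.sup' Finset.univ_nonempty
          (fun c : Fin 10 => ∑ f, Pjoint c f gv) ≤ 1/10 := by
      intro gv
      apply Finset.sup'_le
      intro c _
      fin_cases c <;> fin_cases gv <;> simp +decide [Pjoint, Fin.sum_univ_two]
    have sup_le_f : ∀ fv : Fin 2,
        Finset.univ.sup' Finset.univ_nonempty
          (fun c : Fin 10 => ∑ g, Pjoint c fv g) ≤ 1/10 := by
      intro fv
      apply Finset.sup'_le
      intro c _
      fin_cases c <;> fin_cases fv <;> simp +decide [Pjoint, Fin.sum_univ_three]
    have sg : ∀ (gv : Fin 3) (c0 : Fin 10), (∑ f, Pjoint c0 f gv) = 1/10 →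
        Finset.univ.sup' Finset.univ_nonempty
          (fun c : Fin 10 => ∑ f, Pjoint c f gv) = 1/10 := fun gv c0 h =>
      le_antisymm (sup_le_g gv)
        (h ▸ Finset.le_sup' (fun c : Fin 10 => ∑ f, Pjoint c f gv) (Finset.mem_univ c0))
    have sf : ∀ (fv : Fin 2) (c0 : Fin 10), (∑ g, Pjoint c0 fv g) = 1/10 →
        Finset.univ.sup' Finset.univ_nonempty
          (fun c : Fin 10 => ∑ g, Pjoint c fv g) = 1/10 := fun fv c0 h =>
      le_antisymm (sup_le_f fv)
        (h ▸ Finset.le_sup' (fun c : Fin 10 => ∑ g, Pjoint c fv g) (Finset.mem_univ c0))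
    have e0 : (∑ f, Pjoint 0 f 0) = 1/10 := by simp +decide [Pjoint, Fin.sum_univ_two]
    have e1 : (∑ f, Pjoint 1 f 1) = 1/10 := by simp +decide [Pjoint, Fin.sum_univ_two]
    have e2 : (∑ f, Pjoint 2 f 2) = 1/10 := by simp +decide [Pjoint, Fin.sum_univ_two]
    have e3 : (∑ g, Pjoint 0 0 g) = 1/10 := by simp +decide [Pjoint, Fin.sum_univ_three]
    have e4 : (∑ g, Pjoint 4 1 g) = 1/10 := by simp +decide [Pjoint, Fin.sum_univ_three]
    rw [Fin.sum_univ_three, Fin.sum_univ_two, sg 0 0 e0, sg 1 1 e1, sg 2 2 e2, sf 0 0 e3, sf 1 4 e4]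
    rw [show (1:ℝ)/10 + 1/10 + 1/10 = 3/10 by norm_num,
        show (1:ℝ)/10 + 1/10 = 2/10 by norm_num]
    have := Real.log_lt_log (show (0:ℝ) < 2/10 by norm_num)
      (show (2:ℝ)/10 < 3/10 by norm_num)
    linarith
end

section
/- Cachin's definition of conditional min-entropy, H̃_∞(X|Y) = ∑_y p_Y(y) · (-log max_x p(x|y)), violates the monotonicity principle: there exists a finite joint distribution with H̃_∞(X|Y) > H_∞(X), i.e., conditioning on Y increases the min-entropy of X under this definition. -/
/-- Cachin's conditional min-entropy
`H̃_∞(X|Y) = ∑_{y : p_Y(y) > 0} p_Y(y) · (-log max_x p(x|y))`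
violates monotonicity: there is a joint pmf with `H̃_∞(X|Y) > H_∞(X)`. -/
theorem cachin_condMinEntropy_not_monotone :
    ∃ (n m : ℕ) (p : Fin (n + 1) → Fin (m + 1) → ℝ),
      (∀ x y, 0 ≤ p x y) ∧ (∑ x, ∑ y, p x y = 1) ∧
      (∑ y ∈ Finset.univ.filter (fun y => 0 < ∑ x, p x y),
          (∑ x, p x y) *
            (-Real.log (Finset.univ.sup' Finset.univ_nonempty
              (fun x => p x y / ∑ x', p x' y)))) >
        -Real.log (Finset.univ.sup' Finset.univ_nonempty (fun x => ∑ y, p x y)) := by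
  refine ⟨1, 1, fun x y =>
    if x = 0 then (if y = 0 then 1/4 else 1/2) else (if y = 0 then 1/4 else 0),
    ?_, ?_, ?_⟩
  · intro x y; dsimp only; split_ifs <;> norm_num
  · simp [Fin.sum_univ_two]; norm_num
  · have huniv : (Finset.univ : Finset (Fin 2)) = {0, 1} := rfl
    have hsup : ∀ f : Fin 2 → ℝ,
        Finset.univ.sup' Finset.univ_nonempty f = max (f 0) (f 1) := by
      intro f
      refine le_antisymm (Finset.sup'_le _ _ fun x _ => ?_)
        (max_le (Finset.le_sup' f (Finset.mem_univ 0)) (Finset.le_sup' f (Finset.mem_univ 1)))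
      fin_cases x
      · exact le_max_left _ _
      · exact le_max_right _ _
    have hfilter : (Finset.univ.filter (fun y : Fin 2 =>
        0 < ∑ x : Fin 2, (fun x y =>
          if x = 0 then (if y = 0 then (1:ℝ)/4 else 1/2) else (if y = 0 then 1/4 else 0)) x y))
        = Finset.univ := by
      apply Finset.filter_true_of_mem
      intro y _
      fin_cases y <;> simp [Fin.sum_univ_two]
    rw [hfilter]
    simp only [hsup, Fin.sum_univ_succ, Fin.sum_univ_zero]
    norm_num
    have h1 : Real.log ((4/3:ℝ)^2) < Real.log 2 :=
      Real.log_lt_log (by positivity) (by norm_num)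
    rw [Real.log_pow] at h1
    have h2 : Real.log (3/4 : ℝ) = - Real.log (4/3 : ℝ) := by
      rw [← Real.log_inv]; norm_num
    have h3 : Real.log (1/2 : ℝ) = - Real.log 2 := by
      rw [← Real.log_inv]; norm_num
    push_cast at h1
    rw [h2, h3]
    linarith
end
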